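/- Fix t ≥ 0, a step size γ_t > 0, points x_t, y_t, h_t ∈ X, and vectors F̂_t, F̂_{t+1} ∈ ℝ^n. Define y_{t+1} = argmin_{z∈X} [⟨γ_t F̂_t − ∇ψ(x_t), z⟩ + ψ(z)], x_{t+1} = argmin_{z∈X} [⟨γ_t F̂_{t+1} − ∇ψ(x_t), z⟩ + ψ(z)], b_{t+1} = F(y_{t+1}) − F̂_{t+1}, h_{t+1} = argmin_{z∈X} [⟨γ_t b_{t+1} − ∇ψ(h_t), z⟩ + ψ(z)], ε_t = ‖F(y_t) − F̂_t‖_*, and ε_{t+1} = ‖b_{t+1}‖_*. If ν > 0 and F is monotone, then for every z ∈ X: γ_t ⟨F(z), y_{t+1} − z⟩ ≤ B_ψ(z,x_t) − B_ψ(z,x_{t+1}) + B_ψ(z,h_t) − B_ψ(z,h_{t+1}) + (2γ_t² L_ν²/α)·((2/α)B_ψ(x_t,y_t))^ν + γ_t⟨b_{t+1}, y_{t+1} − h_t⟩ + (2γ_t² L_ν²/α)·((2/α)B_ψ(y_{t+1},x_t))^ν + (γ_t²/α)(4ε_t² + (9/2)ε_{t+1}²) + 8γ_t² M_ν²/α.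 -/

import Mathlib

open scoped RealInnerProductSpace
open MeasureTheory

/-- The dual norm `‖u‖_* = sup_{‖z‖ ≤ 1} ⟨u,z⟩` associated with a norm `nrm` on `ℝ^n`. -/
noncomputable def dualNorm {n : ℕ} (nrm : EuclideanSpace ℝ (Fin n) → ℝ)
    (u : EuclideanSpace ℝ (Fin n)) : ℝ :=
  sSup {r : ℝ | ∃ z : EuclideanSpace ℝ (Fin n), nrm z ≤ 1 ∧ r = ⟪u, z⟫}

/-- The Bregman divergence `B_ψ(z,x) = ψ(z) − ψ(x) − ⟨∇ψ(x), z−x⟩`. -/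
noncomputable def Bpsi {n : ℕ} (ψ : EuclideanSpace ℝ (Fin n) → ℝ)
    (gψ : EuclideanSpace ℝ (Fin n) → EuclideanSpace ℝ (Fin n))
    (z x : EuclideanSpace ℝ (Fin n)) : ℝ :=
  ψ z - ψ x - ⟪gψ x, z - x⟫

/-- `x` is a minimizer of `f` over the set `X`. -/
def IsArgminOver {n : ℕ} (f : EuclideanSpace ℝ (Fin n) → ℝ)
    (X : Set (EuclideanSpace ℝ (Fin n))) (x : EuclideanSpace ℝ (Fin n)) : Prop :=
  x ∈ X ∧ ∀ z ∈ X, f x ≤ f z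

/-- The dual gap function `G(x) = sup_{z ∈ X} ⟨F(z), x − z⟩`. -/
noncomputable def gapFun {n : ℕ} (X : Set (EuclideanSpace ℝ (Fin n)))
    (F : EuclideanSpace ℝ (Fin n) → EuclideanSpace ℝ (Fin n))
    (x : EuclideanSpace ℝ (Fin n)) : ℝ :=
  sSup {r : ℝ | ∃ z ∈ X, r = ⟪F z, x - z⟫}

/-- The residual `R_γ(x) = (1/γ)(x − P_x(γ F(x)))`, where `P` is the prox mapping. -/
noncomputable def residFun {n : ℕ}
    (P : EuclideanSpace ℝ (Fin n) → EuclideanSpace ℝ (Fin n) → EuclideanSpace ℝ (Fin n))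
    (F : EuclideanSpace ℝ (Fin n) → EuclideanSpace ℝ (Fin n)) (γ : ℝ)
    (x : EuclideanSpace ℝ (Fin n)) : EuclideanSpace ℝ (Fin n) :=
  (1 / γ) • (x - P x (γ • F x))

set_option linter.unusedSectionVars false

section infra
variable {n : ℕ} (nrm : EuclideanSpace ℝ (Fin n) → ℝ)
  (hnrm0 : ∀ x, nrm x = 0 ↔ x = 0)
  (hnrms : ∀ (a : ℝ) (x : EuclideanSpace ℝ (Fin n)), nrm (a • x) = |a| * nrm x)
  (hnrma : ∀ x y, nrm (x + y) ≤ nrm x + nrm y)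

include hnrm0 hnrms hnrma

omit hnrms hnrma in
lemma nrm_zero : nrm 0 = 0 := (hnrm0 0).mpr rfl

lemma nrm_nonneg : ∀ x, 0 ≤ nrm x := by
  intro x
  have h1 := hnrma x (-x)
  have h2 : nrm (-x) = nrm x := by
    have := hnrms (-1) x; simpa using this
  have h3 : nrm (x + -x) = 0 := by simpa using nrm_zero nrm hnrm0
  linarith

lemma nrm_neg_eq (x : EuclideanSpace ℝ (Fin n)) : nrm (-x) = nrm x := by
  have := hnrms (-1) x; simpa using this

lemma nrm_le_const_mul_norm : ∃ C : ℝ, 0 ≤ C ∧ ∀ x, nrm x ≤ C * ‖x‖ := by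
  refine ⟨∑ i : Fin n, nrm (EuclideanSpace.single i 1), Finset.sum_nonneg fun i _ =>
    nrm_nonneg nrm hnrm0 hnrms hnrma _, fun x => ?_⟩
  have hx : x = ∑ i : Fin n, (x i) • EuclideanSpace.single i (1:ℝ) := by
    have := (EuclideanSpace.basisFun (Fin n) ℝ).sum_repr x
    simp only [EuclideanSpace.basisFun_apply, EuclideanSpace.basisFun_repr] at this
    exact this.symm
  calc nrm x ≤ ∑ i : Fin n, nrm ((x i) • EuclideanSpace.single i (1:ℝ)) := by
        nth_rewrite 1 [hx]
        exact Finset.le_sum_of_subadditive nrm (nrm_zero nrm hnrm0).le hnrma _ _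
    _ ≤ ∑ i : Fin n, ‖x‖ * nrm (EuclideanSpace.single i (1:ℝ)) := by
        refine Finset.sum_le_sum fun i _ => ?_
        rw [hnrms]
        have h1 : |x i| ≤ ‖x‖ := by
          have h2 := abs_real_inner_le_norm x (EuclideanSpace.single i (1:ℝ))
          rw [EuclideanSpace.inner_single_right] at h2
          simpa [EuclideanSpace.norm_single] using h2
        exact mul_le_mul_of_nonneg_right h1 (nrm_nonneg nrm hnrm0 hnrms hnrma _)
    _ = (∑ i : Fin n, nrm (EuclideanSpace.single i 1)) * ‖x‖ := by
        rw [Finset.sum_mul]; exact Finset.sum_congr rfl fun i _ => mul_comm _ _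

lemma nrm_lipschitz : Continuous nrm := by
  obtain ⟨C, hC0, hC⟩ := nrm_le_const_mul_norm nrm hnrm0 hnrms hnrma
  have key : ∀ x y, dist (nrm x) (nrm y) ≤ (C.toNNReal : ℝ) * dist x y := by
    intro x y
    have h1 : nrm x - nrm y ≤ nrm (x - y) := by
      have := hnrma (x - y) y; simpa using this
    have h2 : nrm y - nrm x ≤ nrm (x - y) := by
      have h3 := hnrma (y - x) x
      have h4 : nrm (y - x) = nrm (x - y) := by
        have := nrm_neg_eq nrm hnrm0 hnrms hnrma (x - y); simpa using this
      rw [h4] at h3; simpa using h3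
    have h5 : nrm (x - y) ≤ C * ‖x - y‖ := hC _
    rw [Real.dist_eq, dist_eq_norm]
    rw [abs_le]
    constructor
    · have : (C.toNNReal : ℝ) = C := Real.coe_toNNReal C hC0
      rw [this]; linarith
    · have : (C.toNNReal : ℝ) = C := Real.coe_toNNReal C hC0
      rw [this]; linarith
  exact (LipschitzWith.of_dist_le_mul key).continuous

lemma nrm_lower : ∃ c : ℝ, 0 < c ∧ ∀ x, c * ‖x‖ ≤ nrm x := by
  rcases (Metric.sphere (0 : EuclideanSpace ℝ (Fin n)) 1).eq_empty_or_nonempty with he | hne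
  · refine ⟨1, one_pos, fun x => ?_⟩
    have hx : x = 0 := by
      by_contra hx0
      have : ‖x‖⁻¹ • x ∈ Metric.sphere (0 : EuclideanSpace ℝ (Fin n)) 1 := by
        simp [norm_smul, abs_inv, inv_mul_cancel₀ (norm_ne_zero_iff.mpr hx0)]
      rw [he] at this; exact this
    simp [hx, nrm_zero nrm hnrm0]
  · obtain ⟨z0, hz0mem, hz0min'⟩ := (isCompact_sphere (0 : EuclideanSpace ℝ (Fin n)) 1).exists_isMinOn
      hne ((nrm_lipschitz nrm hnrm0 hnrms hnrma).continuousOn)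
    have hz0min : ∀ y ∈ Metric.sphere (0 : EuclideanSpace ℝ (Fin n)) 1, nrm z0 ≤ nrm y := fun y hy => hz0min' hy
    have hz0pos : 0 < nrm z0 := by
      rcases lt_or_eq_of_le (nrm_nonneg nrm hnrm0 hnrms hnrma z0) with h | h
      · exact h
      · exfalso
        have := (hnrm0 z0).mp h.symm
        rw [this] at hz0mem
        simp at hz0mem
    refine ⟨nrm z0, hz0pos, fun x => ?_⟩
    by_cases hx0 : x = 0
    · simp [hx0, nrm_zero nrm hnrm0]
    · have hxn : (0:ℝ) < ‖x‖ := norm_pos_iff.mpr hx0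
      have hmem : ‖x‖⁻¹ • x ∈ Metric.sphere (0 : EuclideanSpace ℝ (Fin n)) 1 := by
        simp [norm_smul, abs_inv, inv_mul_cancel₀ (ne_of_gt hxn)]
      have := hz0min _ hmem
      rw [hnrms, abs_inv, abs_of_pos hxn] at this
      calc nrm z0 * ‖x‖ ≤ (‖x‖⁻¹ * nrm x) * ‖x‖ := by nlinarith
        _ = nrm x := by field_simp

end infra

section dual
variable {n : ℕ} {nrm : EuclideanSpace ℝ (Fin n) → ℝ}
  (hnrm0 : ∀ x, nrm x = 0 ↔ x = 0)
  (hnrms : ∀ (a : ℝ) (x : EuclideanSpace ℝ (Fin n)), nrm (a • x) = |a| * nrm x)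
  (hnrma : ∀ x y, nrm (x + y) ≤ nrm x + nrm y)
  (hlow : ∃ c : ℝ, 0 < c ∧ ∀ x, c * ‖x‖ ≤ nrm x)

include hlow in
lemma dual_bddAbove (u : EuclideanSpace ℝ (Fin n)) :
    BddAbove {r : ℝ | ∃ z : EuclideanSpace ℝ (Fin n), nrm z ≤ 1 ∧ r = ⟪u, z⟫} := by
  obtain ⟨c, hc, hcl⟩ := hlow
  refine ⟨‖u‖ * (1 / c), fun r hr => ?_⟩
  obtain ⟨z, hz1, rfl⟩ := hr
  have h1 : ⟪u, z⟫ ≤ ‖u‖ * ‖z‖ := real_inner_le_norm u z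
  have h2 : ‖z‖ ≤ 1 / c := by
    have := hcl z
    rw [le_div_iff₀ hc]
    nlinarith
  nlinarith [norm_nonneg u]

include hnrm0 in
lemma dualNorm_nonneg (hbdd : ∀ u : EuclideanSpace ℝ (Fin n),
      BddAbove {r : ℝ | ∃ z : EuclideanSpace ℝ (Fin n), nrm z ≤ 1 ∧ r = ⟪u, z⟫})
    (u : EuclideanSpace ℝ (Fin n)) : 0 ≤ dualNorm nrm u := by
  refine le_csSup (hbdd u) ⟨0, ?_, by simp⟩
  rw [(hnrm0 0).mpr rfl]; norm_num

include hnrm0 hnrms in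
lemma inner_le_dualNorm_mul (hbdd : ∀ u : EuclideanSpace ℝ (Fin n),
      BddAbove {r : ℝ | ∃ z : EuclideanSpace ℝ (Fin n), nrm z ≤ 1 ∧ r = ⟪u, z⟫})
    (hnn : ∀ x, 0 ≤ nrm x)
    (u v : EuclideanSpace ℝ (Fin n)) : ⟪u, v⟫ ≤ dualNorm nrm u * nrm v := by
  rcases eq_or_lt_of_le (hnn v) with h | h
  · have hv : v = 0 := (hnrm0 v).mp h.symm
    have h0 : nrm (0 : EuclideanSpace ℝ (Fin n)) = 0 := (hnrm0 0).mpr rfl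
    simp [hv, h0]
  · have hz : nrm ((nrm v)⁻¹ • v) ≤ 1 := by
      rw [hnrms, abs_inv, abs_of_pos h, inv_mul_cancel₀ (ne_of_gt h)]
    have hmem : ⟪u, (nrm v)⁻¹ • v⟫ ∈
        {r : ℝ | ∃ z : EuclideanSpace ℝ (Fin n), nrm z ≤ 1 ∧ r = ⟪u, z⟫} := ⟨_, hz, rfl⟩
    have hle := le_csSup (hbdd u) hmem
    rw [real_inner_smul_right] at hle
    have := mul_le_mul_of_nonneg_right hle (le_of_lt h)
    calc ⟪u, v⟫ = (nrm v)⁻¹ * ⟪u, v⟫ * nrm v := by field_simp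
      _ ≤ dualNorm nrm u * nrm v := this

end dual

section opt
variable {n : ℕ} {X : Set (EuclideanSpace ℝ (Fin n))}
  {ψ : EuclideanSpace ℝ (Fin n) → ℝ}
  {gψ : EuclideanSpace ℝ (Fin n) → EuclideanSpace ℝ (Fin n)}

lemma grad_ineq {nrm : EuclideanSpace ℝ (Fin n) → ℝ} {α : ℝ} (hα : 0 < α)
    (hnn : ∀ x, 0 ≤ nrm x)
    (hsc : ∀ x ∈ X, ∀ z ∈ X, ψ x + ⟪gψ x, z - x⟫ + α / 2 * nrm (z - x) ^ 2 ≤ ψ z)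
    {x z : EuclideanSpace ℝ (Fin n)} (hx : x ∈ X) (hz : z ∈ X) :
    ψ x + ⟪gψ x, z - x⟫ ≤ ψ z := by
  have h1 := hsc x hx z hz
  nlinarith [hnn (z - x), sq_nonneg (nrm (z - x))]

lemma argmin_vi (hXcv : Convex ℝ X) (hgradc : ContinuousOn gψ X)
    {nrm : EuclideanSpace ℝ (Fin n) → ℝ} {α : ℝ} (hα : 0 < α)
    (hnn : ∀ x, 0 ≤ nrm x)
    (hsc : ∀ x ∈ X, ∀ z ∈ X, ψ x + ⟪gψ x, z - x⟫ + α / 2 * nrm (z - x) ^ 2 ≤ ψ z)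
    (g : EuclideanSpace ℝ (Fin n)) {w : EuclideanSpace ℝ (Fin n)}
    (hw : IsArgminOver (fun z => ⟪g, z⟫ + ψ z) X w) :
    ∀ z ∈ X, 0 ≤ ⟪g + gψ w, z - w⟫ := by
  obtain ⟨hwX, hmin⟩ := hw
  intro z hz
  have hmemX : ∀ s ∈ Set.Ioc (0:ℝ) 1, w + s • (z - w) ∈ X := by
    intro s hs
    obtain ⟨hs0, hs1⟩ := hs
    have h := hXcv hwX hz (by linarith : (0:ℝ) ≤ 1 - s) (le_of_lt hs0) (by ring)
    convert h using 1
    module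
  have key : ∀ s ∈ Set.Ioc (0:ℝ) 1, 0 ≤ ⟪g + gψ (w + s • (z - w)), z - w⟫ := by
    intro s hs
    have hwsX : w + s • (z - w) ∈ X := hmemX s hs
    obtain ⟨hs0, hs1⟩ := hs
    have h1 : ⟪g, w⟫ + ψ w ≤ ⟪g, w + s • (z - w)⟫ + ψ (w + s • (z - w)) := hmin _ hwsX
    have h2 : ψ (w + s • (z - w)) + ⟪gψ (w + s • (z - w)), w - (w + s • (z - w))⟫ ≤ ψ w :=
      grad_ineq hα hnn hsc hwsX hwX
    have h3 : ⟪gψ (w + s • (z - w)), w - (w + s • (z - w))⟫ = -s * ⟪gψ (w + s • (z - w)), z - w⟫ := by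
      have : w - (w + s • (z - w)) = (-s) • (z - w) := by module
      rw [this, real_inner_smul_right]
    have h4 : ⟪g, w + s • (z - w)⟫ = ⟪g, w⟫ + s * ⟪g, z - w⟫ := by
      rw [inner_add_right, real_inner_smul_right]
    rw [inner_add_left]
    rw [h3] at h2
    rw [h4] at h1
    have h5 : 0 ≤ s * (⟪g, z - w⟫ + ⟪gψ (w + s • (z - w)), z - w⟫) := by nlinarith
    have := nonneg_of_mul_nonneg_right h5 hs0
    linarith [this]
  have hpath : Filter.Tendsto (fun s : ℝ => w + s • (z - w)) (nhdsWithin 0 (Set.Ioi 0))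
      (nhdsWithin w X) := by
    rw [tendsto_nhdsWithin_iff]
    constructor
    · have hc : Continuous (fun s : ℝ => w + s • (z - w)) := by continuity
      have h0 := hc.tendsto 0
      simp only [zero_smul, add_zero] at h0
      exact h0.mono_left nhdsWithin_le_nhds
    · filter_upwards [Ioc_mem_nhdsGT_of_mem (Set.mem_Ico.mpr ⟨le_refl (0:ℝ), one_pos⟩)] with s hs
      exact hmemX s hs
  have hcont : Filter.Tendsto (fun s : ℝ => ⟪g + gψ (w + s • (z - w)), z - w⟫)
      (nhdsWithin 0 (Set.Ioi 0)) (nhds ⟪g + gψ w, z - w⟫) := by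
    have h1 : Filter.Tendsto (fun s : ℝ => gψ (w + s • (z - w))) (nhdsWithin 0 (Set.Ioi 0))
        (nhds (gψ w)) := (hgradc w hwX).tendsto.comp hpath
    have h2 : Continuous (fun u : EuclideanSpace ℝ (Fin n) => ⟪g + u, z - w⟫) :=
      (continuous_const.add continuous_id).inner continuous_const
    exact (h2.tendsto (gψ w)).comp h1
  refine ge_of_tendsto hcont ?_
  filter_upwards [Ioc_mem_nhdsGT_of_mem (Set.mem_Ico.mpr ⟨le_refl (0:ℝ), one_pos⟩)] with s hs
  exact key s hs

lemma bpsi_three_point (x w z : EuclideanSpace ℝ (Fin n)) :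
    ⟪gψ x - gψ w, z - w⟫ = Bpsi ψ gψ z w + Bpsi ψ gψ w x - Bpsi ψ gψ z x := by
  simp only [Bpsi, inner_sub_left, inner_sub_right]
  ring

lemma prox_three_point (hXcv : Convex ℝ X) (hgradc : ContinuousOn gψ X)
    {nrm : EuclideanSpace ℝ (Fin n) → ℝ} {α : ℝ} (hα : 0 < α)
    (hnn : ∀ x, 0 ≤ nrm x)
    (hsc : ∀ x ∈ X, ∀ z ∈ X, ψ x + ⟪gψ x, z - x⟫ + α / 2 * nrm (z - x) ^ 2 ≤ ψ z)
    (γ : ℝ) (v x : EuclideanSpace ℝ (Fin n)) {w : EuclideanSpace ℝ (Fin n)}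
    (hw : IsArgminOver (fun z => ⟪γ • v - gψ x, z⟫ + ψ z) X w) :
    ∀ z ∈ X, γ * ⟪v, w - z⟫ ≤ Bpsi ψ gψ z x - Bpsi ψ gψ z w - Bpsi ψ gψ w x := by
  intro z hz
  have hvi := argmin_vi hXcv hgradc hα hnn hsc (γ • v - gψ x) hw z hz
  have h1 : ⟪γ • v - gψ x + gψ w, z - w⟫
      = γ * ⟪v, z - w⟫ - ⟪gψ x - gψ w, z - w⟫ := by
    simp only [inner_sub_left, inner_add_left, real_inner_smul_left]
    ring
  have h2 := bpsi_three_point (gψ := gψ) (ψ := ψ) x w z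
  have h3 : ⟪v, w - z⟫ = -⟪v, z - w⟫ := by
    simp only [inner_sub_right]; ring
  rw [h1, h2] at hvi
  rw [h3]
  linarith

end opt


set_option maxHeartbeats 2000000 in
/-- one step of the stochastic Popov mirror-prox combined with the auxiliary
sequence `h_t`, for a monotone mapping with `ν > 0`. -/
theorem stmt_6 {n : ℕ}
    (X : Set (EuclideanSpace ℝ (Fin n)))
    (hXne : X.Nonempty) (hXcl : IsClosed X) (hXcv : Convex ℝ X)
    (nrm : EuclideanSpace ℝ (Fin n) → ℝ)
    (hnrm0 : ∀ x, nrm x = 0 ↔ x = 0)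
    (hnrms : ∀ (a : ℝ) (x : EuclideanSpace ℝ (Fin n)), nrm (a • x) = |a| * nrm x)
    (hnrma : ∀ x y, nrm (x + y) ≤ nrm x + nrm y)
    (ψ : EuclideanSpace ℝ (Fin n) → ℝ)
    (gψ : EuclideanSpace ℝ (Fin n) → EuclideanSpace ℝ (Fin n))
    (α : ℝ) (hα : 0 < α)
    (hgrad : ∀ x ∈ X, HasGradientAt ψ (gψ x) x)
    (hgradc : ContinuousOn gψ X)
    (hsc : ∀ x ∈ X, ∀ z ∈ X, ψ x + ⟪gψ x, z - x⟫ + α / 2 * nrm (z - x) ^ 2 ≤ ψ z)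
    (F : EuclideanSpace ℝ (Fin n) → EuclideanSpace ℝ (Fin n))
    (ν L M : ℝ) (hν : 0 < ν) (hL : 0 < L) (hM : 0 ≤ M)
    (hF : ∀ x ∈ X, ∀ y ∈ X, dualNorm nrm (F x - F y) ≤ L * nrm (x - y) ^ ν + M)
    (hmono : ∀ x ∈ X, ∀ y ∈ X, 0 ≤ ⟪F x - F y, x - y⟫)
    (γ : ℝ) (hγ : 0 < γ)
    (xt yt ht : EuclideanSpace ℝ (Fin n)) (hxt : xt ∈ X) (hyt : yt ∈ X) (hht : ht ∈ X)
    (Fh1 Fh2 : EuclideanSpace ℝ (Fin n))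
    (yn xn hn : EuclideanSpace ℝ (Fin n))
    (hyn : IsArgminOver (fun z => ⟪γ • Fh1 - gψ xt, z⟫ + ψ z) X yn)
    (hxn : IsArgminOver (fun z => ⟪γ • Fh2 - gψ xt, z⟫ + ψ z) X xn)
    (hhn : IsArgminOver (fun z => ⟪γ • (F yn - Fh2) - gψ ht, z⟫ + ψ z) X hn) :
    ∀ z ∈ X,
      γ * ⟪F z, yn - z⟫ ≤
        Bpsi ψ gψ z xt - Bpsi ψ gψ z xn
          + Bpsi ψ gψ z ht - Bpsi ψ gψ z hn
          + 2 * γ ^ 2 * L ^ 2 / α * ((2 / α) * Bpsi ψ gψ xt yt) ^ ν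
          + γ * ⟪F yn - Fh2, yn - ht⟫
          + 2 * γ ^ 2 * L ^ 2 / α * ((2 / α) * Bpsi ψ gψ yn xt) ^ ν
          + γ ^ 2 / α * (4 * dualNorm nrm (F yt - Fh1) ^ 2 + 9 / 2 * dualNorm nrm (F yn - Fh2) ^ 2)
          + 8 * γ ^ 2 * M ^ 2 / α := by
  intro z hz
  have hnn := nrm_nonneg nrm hnrm0 hnrms hnrma
  have hsymm : ∀ u v : EuclideanSpace ℝ (Fin n), nrm (u - v) = nrm (v - u) := by
    intro u v
    rw [← neg_sub v u, nrm_neg_eq nrm hnrm0 hnrms hnrma]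
  have hlow := nrm_lower nrm hnrm0 hnrms hnrma
  have hbdd : ∀ u : EuclideanSpace ℝ (Fin n),
      BddAbove {r : ℝ | ∃ z : EuclideanSpace ℝ (Fin n), nrm z ≤ 1 ∧ r = ⟪u, z⟫} :=
    fun u => dual_bddAbove hlow u
  have hdual := inner_le_dualNorm_mul hnrm0 hnrms hbdd hnn
  have hdnn := dualNorm_nonneg hnrm0 hbdd
  have hynX := hyn.1
  have hxnX := hxn.1
  have hhnX := hhn.1
  have hB : ∀ u ∈ X, ∀ v ∈ X, α / 2 * nrm (u - v) ^ 2 ≤ Bpsi ψ gψ u v := by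
    intro u hu v hv
    have := hsc v hv u hu
    simp only [Bpsi]
    linarith
  -- abbreviations
  set E1 := dualNorm nrm (F yt - Fh1) with hE1def
  set E2 := dualNorm nrm (F yn - Fh2) with hE2def
  set A1 := ((2 / α) * Bpsi ψ gψ xt yt) ^ ν with hA1def
  set A2 := ((2 / α) * Bpsi ψ gψ yn xt) ^ ν with hA2def
  set s := nrm (yn - xn) with hsdef
  set a := nrm (yn - xt) with hadef
  set bb := nrm (xt - yt) with hbbdef
  have hs0 : 0 ≤ s := hnn _
  have ha0 : 0 ≤ a := hnn _
  have hbb0 : 0 ≤ bb := hnn _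
  -- prox three-point inequalities
  have P1 := prox_three_point hXcv hgradc hα hnn hsc γ Fh2 xt hxn z hz
  have P2 := prox_three_point hXcv hgradc hα hnn hsc γ Fh1 xt hyn xn hxnX
  have P3 := prox_three_point hXcv hgradc hα hnn hsc γ (F yn - Fh2) ht hhn z hz
  -- monotonicity
  have hm : γ * ⟪F z, yn - z⟫ ≤ γ * ⟪F yn, yn - z⟫ := by
    have h1 := hmono yn hynX z hz
    have h2 : ⟪F yn - F z, yn - z⟫ = ⟪F yn, yn - z⟫ - ⟪F z, yn - z⟫ := inner_sub_left _ _ _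
    have h3 : ⟪F z, yn - z⟫ ≤ ⟪F yn, yn - z⟫ := by linarith
    exact mul_le_mul_of_nonneg_left h3 hγ.le
  -- decomposition
  have hdecomp : γ * ⟪F yn, yn - z⟫ =
      γ * ⟪Fh2, xn - z⟫ + γ * ⟪Fh1, yn - xn⟫ + γ * ⟪Fh2 - Fh1, yn - xn⟫
      + γ * ⟪F yn - Fh2, yn - ht⟫ + γ * ⟪F yn - Fh2, ht - hn⟫ + γ * ⟪F yn - Fh2, hn - z⟫ := by
    simp only [inner_sub_left, inner_sub_right]
    ring
  have m2 : α * (γ * ⟪F yn, yn - z⟫) =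
      α * (γ * ⟪Fh2, xn - z⟫ + γ * ⟪Fh1, yn - xn⟫ + γ * ⟪Fh2 - Fh1, yn - xn⟫
      + γ * ⟪F yn - Fh2, yn - ht⟫ + γ * ⟪F yn - Fh2, ht - hn⟫ + γ * ⟪F yn - Fh2, hn - z⟫) := by
    rw [hdecomp]
  -- h-step bound
  have m4 : α * (γ * ⟪F yn - Fh2, ht - hn⟫) ≤ 1 / 2 * γ ^ 2 * E2 ^ 2 + α * Bpsi ψ gψ hn ht := by
    have h41 : ⟪F yn - Fh2, ht - hn⟫ ≤ E2 * nrm (hn - ht) := by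
      have := hdual (F yn - Fh2) (ht - hn)
      rw [hsymm ht hn] at this
      exact this
    have h42 := hB hn hhnX ht hht
    have h43 := mul_le_mul_of_nonneg_left h41 (mul_nonneg hα.le hγ.le)
    linarith [h43, sq_nonneg (γ * E2 - α * nrm (hn - ht)), mul_le_mul_of_nonneg_left h42 hα.le]
  -- pieces of the Fh2 - Fh1 term
  have hid5 : ⟪Fh2 - Fh1, yn - xn⟫ =
      ⟪F yn - Fh2, xn - yn⟫ + ⟪F yn - F xt, yn - xn⟫ + ⟪F xt - F yt, yn - xn⟫
      + ⟪F yt - Fh1, yn - xn⟫ := by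
    simp only [inner_sub_left, inner_sub_right]
    ring
  have hq1 : ⟪F yn - Fh2, xn - yn⟫ ≤ E2 * s := by
    have := hdual (F yn - Fh2) (xn - yn)
    rwa [hsymm xn yn] at this
  have hq4 : ⟪F yt - Fh1, yn - xn⟫ ≤ E1 * s := hdual (F yt - Fh1) (yn - xn)
  have hc2 : dualNorm nrm (F yn - F xt) ≤ L * a ^ ν + M := hF yn hynX xt hxt
  have hc3 : dualNorm nrm (F xt - F yt) ≤ L * bb ^ ν + M := hF xt hxt yt hyt
  have hq2 : ⟪F yn - F xt, yn - xn⟫ ≤ (L * a ^ ν + M) * s := by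
    have h := hdual (F yn - F xt) (yn - xn)
    have := mul_le_mul_of_nonneg_right hc2 hs0
    linarith
  have hq3 : ⟪F xt - F yt, yn - xn⟫ ≤ (L * bb ^ ν + M) * s := by
    have h := hdual (F xt - F yt) (yn - xn)
    have := mul_le_mul_of_nonneg_right hc3 hs0
    linarith
  -- rpow facts
  have hrpow : ∀ t : ℝ, 0 ≤ t → (t ^ ν) ^ 2 = (t ^ 2) ^ ν := by
    intro t ht
    rw [← Real.rpow_natCast (t ^ ν) 2, ← Real.rpow_mul ht, ← Real.rpow_natCast t 2,
      ← Real.rpow_mul ht, mul_comm]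
  have hA2b : (a ^ ν) ^ 2 ≤ A2 := by
    rw [hrpow a ha0, hA2def]
    refine Real.rpow_le_rpow (sq_nonneg a) ?_ hν.le
    rw [div_mul_eq_mul_div, le_div_iff₀ hα]
    linarith [hB yn hynX xt hxt]
  have hA1b : (bb ^ ν) ^ 2 ≤ A1 := by
    rw [hrpow bb hbb0, hA1def]
    refine Real.rpow_le_rpow (sq_nonneg bb) ?_ hν.le
    rw [div_mul_eq_mul_div, le_div_iff₀ hα]
    linarith [hB xt hxt yt hyt]
  have hanu : 0 ≤ a ^ ν := Real.rpow_nonneg ha0 ν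
  have hbbnu : 0 ≤ bb ^ ν := Real.rpow_nonneg hbb0 ν
  -- Young inequalities, multiplied by α
  have Y1 : α * (γ * ⟪F yn - Fh2, xn - yn⟫) ≤ 4 * γ ^ 2 * E2 ^ 2 + α ^ 2 / 16 * s ^ 2 := by
    have h := mul_le_mul_of_nonneg_left hq1 (mul_nonneg hα.le hγ.le)
    linarith [h, sq_nonneg (2 * γ * E2 - α / 4 * s)]
  have Y4 : α * (γ * ⟪F yt - Fh1, yn - xn⟫) ≤ 4 * γ ^ 2 * E1 ^ 2 + α ^ 2 / 16 * s ^ 2 := by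
    have h := mul_le_mul_of_nonneg_left hq4 (mul_nonneg hα.le hγ.le)
    linarith [h, sq_nonneg (2 * γ * E1 - α / 4 * s)]
  have Y2 : α * (γ * ⟪F yn - F xt, yn - xn⟫) ≤
      2 * γ ^ 2 * L ^ 2 * A2 + 4 * γ ^ 2 * M ^ 2 + 3 / 16 * α ^ 2 * s ^ 2 := by
    have h := mul_le_mul_of_nonneg_left hq2 (mul_nonneg hα.le hγ.le)
    have hy : α * (γ * ((L * a ^ ν + M) * s)) ≤
        4 / 3 * γ ^ 2 * (L * a ^ ν + M) ^ 2 + 3 / 16 * α ^ 2 * s ^ 2 := by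
      linarith [sq_nonneg (4 * γ * (L * a ^ ν + M) - 3 / 2 * α * s)]
    have hsq : (L * a ^ ν + M) ^ 2 ≤ 3 / 2 * L ^ 2 * (a ^ ν) ^ 2 + 3 * M ^ 2 := by
      linarith [sq_nonneg (L * a ^ ν - 2 * M)]
    linarith [h, hy, mul_le_mul_of_nonneg_left hsq (by positivity : (0:ℝ) ≤ 4 / 3 * γ ^ 2),
      mul_le_mul_of_nonneg_left hA2b (by positivity : (0:ℝ) ≤ 2 * γ ^ 2 * L ^ 2)]
  have Y3 : α * (γ * ⟪F xt - F yt, yn - xn⟫) ≤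
      2 * γ ^ 2 * L ^ 2 * A1 + 4 * γ ^ 2 * M ^ 2 + 3 / 16 * α ^ 2 * s ^ 2 := by
    have h := mul_le_mul_of_nonneg_left hq3 (mul_nonneg hα.le hγ.le)
    have hy : α * (γ * ((L * bb ^ ν + M) * s)) ≤
        4 / 3 * γ ^ 2 * (L * bb ^ ν + M) ^ 2 + 3 / 16 * α ^ 2 * s ^ 2 := by
      linarith [sq_nonneg (4 * γ * (L * bb ^ ν + M) - 3 / 2 * α * s)]
    have hsq : (L * bb ^ ν + M) ^ 2 ≤ 3 / 2 * L ^ 2 * (bb ^ ν) ^ 2 + 3 * M ^ 2 := by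
      linarith [sq_nonneg (L * bb ^ ν - 2 * M)]
    linarith [h, hy, mul_le_mul_of_nonneg_left hsq (by positivity : (0:ℝ) ≤ 4 / 3 * γ ^ 2),
      mul_le_mul_of_nonneg_left hA1b (by positivity : (0:ℝ) ≤ 2 * γ ^ 2 * L ^ 2)]
  -- combine the Fh2-Fh1 term
  have m5 : α * (γ * ⟪Fh2 - Fh1, yn - xn⟫) ≤
      4 * γ ^ 2 * E2 ^ 2 + 4 * γ ^ 2 * E1 ^ 2 + 2 * γ ^ 2 * L ^ 2 * A2 + 2 * γ ^ 2 * L ^ 2 * A1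
      + 8 * γ ^ 2 * M ^ 2 + α ^ 2 / 2 * s ^ 2 := by
    have hm2 : α * (γ * ⟪Fh2 - Fh1, yn - xn⟫) =
        α * (γ * ⟪F yn - Fh2, xn - yn⟫) + α * (γ * ⟪F yn - F xt, yn - xn⟫)
        + α * (γ * ⟪F xt - F yt, yn - xn⟫) + α * (γ * ⟪F yt - Fh1, yn - xn⟫) := by
      rw [hid5]; ring
    rw [hm2]
    linarith
  -- quadratic absorption
  have m6 : α ^ 2 / 2 * s ^ 2 ≤ α * Bpsi ψ gψ xn yn := by
    have h := hB xn hxnX yn hynX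
    rw [hsymm xn yn] at h
    linarith [mul_le_mul_of_nonneg_left h hα.le]
  have m7 : 0 ≤ Bpsi ψ gψ yn xt := by
    have h := hB yn hynX xt hxt
    linarith [mul_nonneg hα.le (sq_nonneg (nrm (yn - xt)))]
  -- α-multiplied prox inequalities
  have aP1 := mul_le_mul_of_nonneg_left P1 hα.le
  have aP2 := mul_le_mul_of_nonneg_left P2 hα.le
  have aP3 := mul_le_mul_of_nonneg_left P3 hα.le
  have am := mul_le_mul_of_nonneg_left hm hα.le
  -- master inequality
  have master : α * (γ * ⟪F z, yn - z⟫) ≤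
      α * Bpsi ψ gψ z xt - α * Bpsi ψ gψ z xn + α * Bpsi ψ gψ z ht - α * Bpsi ψ gψ z hn
      + 2 * γ ^ 2 * L ^ 2 * A1 + α * (γ * ⟪F yn - Fh2, yn - ht⟫) + 2 * γ ^ 2 * L ^ 2 * A2
      + γ ^ 2 * (4 * E1 ^ 2 + 9 / 2 * E2 ^ 2) + 8 * γ ^ 2 * M ^ 2 := by
    linarith [am, m2, m4, m5, m6, aP1, aP2, aP3, mul_le_mul_of_nonneg_left m7 hα.le]
  rw [← mul_le_mul_iff_right₀ hα]
  calc α * (γ * ⟪F z, yn - z⟫) ≤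
      α * Bpsi ψ gψ z xt - α * Bpsi ψ gψ z xn + α * Bpsi ψ gψ z ht - α * Bpsi ψ gψ z hn
      + 2 * γ ^ 2 * L ^ 2 * A1 + α * (γ * ⟪F yn - Fh2, yn - ht⟫) + 2 * γ ^ 2 * L ^ 2 * A2
      + γ ^ 2 * (4 * E1 ^ 2 + 9 / 2 * E2 ^ 2) + 8 * γ ^ 2 * M ^ 2 := master
    _ = α * (Bpsi ψ gψ z xt - Bpsi ψ gψ z xn + Bpsi ψ gψ z ht - Bpsi ψ gψ z hn
          + 2 * γ ^ 2 * L ^ 2 / α * A1 + γ * ⟪F yn - Fh2, yn - ht⟫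
          + 2 * γ ^ 2 * L ^ 2 / α * A2
          + γ ^ 2 / α * (4 * E1 ^ 2 + 9 / 2 * E2 ^ 2)
          + 8 * γ ^ 2 * M ^ 2 / α) := by
      field_simp
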